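/- Let L → M → N be a short exact sequence of R-modules where N is S-h-divisible and L is S-torsion-free and S-h-divisible. Then M is S-h-divisible. -/

import Mathlib

/-!
Choose a surjection `g : F → N` from a module over `S⁻¹R` and pull the extension back along it.
The pullback `E = M ×_N F` is an extension of `F` by `L`. Every `s ∈ S` acts bijectively on `F`,
and on `L` because `L` is `S`-torsion-free and `S`-h-divisible, so by the five lemma it acts
bijectively on `E`. Hence `E` is its own localization at `S`, a module over `S⁻¹R`, and it
surjects onto `M`.
-/

/-- An `R`-module `C` is S-h-divisible if it is a quotient of a module over `S⁻¹R`
(equivalently, of a free `S⁻¹R`-module). -/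
def IsSHDivisible (R : Type) [CommRing R] (S : Submonoid R)
    (C : Type) [AddCommGroup C] [Module R C] : Prop :=
  ∃ (ι : Type) (f : (ι →₀ Localization S) →ₗ[R] C), Function.Surjective f

open Module LinearMap

section Divisible

variable {R : Type} [CommRing R] {S : Submonoid R}

theorem IsSHDivisible.of_surjective {C D : Type} [AddCommGroup C] [Module R C]
    [AddCommGroup D] [Module R D] (h : IsSHDivisible R S C) (f : C →ₗ[R] D)
    (hf : Function.Surjective f) : IsSHDivisible R S D :=
  let ⟨ι, g, hg⟩ := h
  ⟨ι, f ∘ₗ g, hf.comp hg⟩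

variable (S) in
theorem isSHDivisible_of_module_localization (C : Type) [AddCommGroup C] [Module R C]
    [Module (Localization S) C] [IsScalarTower R (Localization S) C] :
    IsSHDivisible R S C :=
  ⟨C, (Finsupp.linearCombination (Localization S) id).restrictScalars R,
    Finsupp.linearCombination_id_surjective _ _⟩

theorem bijective_algebraMap_of_module_localization (C : Type) [AddCommGroup C] [Module R C]
    [Module (Localization S) C] [IsScalarTower R (Localization S) C] (s : S) :
    Function.Bijective (algebraMap R (End R C) s) :=
  (End.isUnit_iff _).mp ((isLocalizedModule_id S C (Localization S)).map_units s)

theorem IsSHDivisible.surjective_algebraMap {C : Type} [AddCommGroup C] [Module R C]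
    (h : IsSHDivisible R S C) (s : S) : Function.Surjective (algebraMap R (End R C) s) := by
  obtain ⟨ι, f, hf⟩ := h
  intro c
  obtain ⟨x, rfl⟩ := hf c
  obtain ⟨y, rfl⟩ := (bijective_algebraMap_of_module_localization _ s).2 x
  exact ⟨f y, by simp⟩

theorem isSHDivisible_of_bijective_algebraMap {C : Type} [AddCommGroup C] [Module R C]
    (h : ∀ s : S, Function.Bijective (algebraMap R (End R C) s)) : IsSHDivisible R S C :=
  have : IsLocalizedModule S (LinearMap.id : C →ₗ[R] C) :=
    { map_units s := (End.isUnit_iff _).mpr (h s)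
      surj y := ⟨⟨y, 1⟩, one_smul _ _⟩
      exists_of_eq hx := ⟨1, congrArg _ hx⟩ }
  (isSHDivisible_of_module_localization S _).of_surjective
    (IsLocalizedModule.iso S LinearMap.id).toLinearMap (LinearEquiv.surjective _)

end Divisible

theorem bijective_algebraMap_of_exact {R : Type*} [CommRing R] {L E F : Type*}
    [AddCommGroup L] [Module R L] [AddCommGroup E] [Module R E] [AddCommGroup F] [Module R F]
    {i : L →ₗ[R] E} {q : E →ₗ[R] F} (hi : Function.Injective i) (hq : Function.Surjective q)
    (hexact : Function.Exact i q) (r : R) (hL : Function.Bijective (algebraMap R (End R L) r))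
    (hF : Function.Bijective (algebraMap R (End R F) r)) :
    Function.Bijective (algebraMap R (End R E) r) :=
  bijective_of_surjective_of_bijective_of_bijective_of_injective
    (0 : PUnit →ₗ[R] L) i q (0 : F →ₗ[R] PUnit) 0 i q 0 0 _ _ _ (0 : PUnit →ₗ[R] PUnit)
    (by simp) (by ext; simp) (by ext; simp) (by simp)
    ((exact_zero_iff_injective PUnit i).mpr hi) hexact ((exact_zero_iff_surjective PUnit q).mpr hq)
    ((exact_zero_iff_injective PUnit i).mpr hi) hexact ((exact_zero_iff_surjective PUnit q).mpr hq)
    (Function.surjective_to_subsingleton _) hL hF (Function.injective_of_subsingleton _)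

namespace LinearMap

variable {R : Type*} [CommRing R] {L M N F : Type*}
    [AddCommGroup L] [Module R L] [AddCommGroup M] [Module R M] [AddCommGroup N] [Module R N]
    [AddCommGroup F] [Module R F]

def pullback (p : M →ₗ[R] N) (g : F →ₗ[R] N) : Submodule R (M × F) :=
  eqLocus (p ∘ₗ fst R M F) (g ∘ₗ snd R M F)

theorem mem_pullback {p : M →ₗ[R] N} {g : F →ₗ[R] N} {x : M × F} :
    x ∈ pullback p g ↔ p x.1 = g x.2 :=
  Iff.rfl

def pullbackInl {i : L →ₗ[R] M} {p : M →ₗ[R] N} (hexact : Function.Exact i p) (g : F →ₗ[R] N) :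
    L →ₗ[R] pullback p g :=
  codRestrict _ (inl R M F ∘ₗ i) fun l => by simp [mem_pullback, hexact.apply_apply_eq_zero]

def pullbackFst (p : M →ₗ[R] N) (g : F →ₗ[R] N) : pullback p g →ₗ[R] M :=
  fst R M F ∘ₗ (pullback p g).subtype

def pullbackSnd (p : M →ₗ[R] N) (g : F →ₗ[R] N) : pullback p g →ₗ[R] F :=
  snd R M F ∘ₗ (pullback p g).subtype

theorem pullbackInl_injective {i : L →ₗ[R] M} {p : M →ₗ[R] N} (hexact : Function.Exact i p)
    (g : F →ₗ[R] N) (hi : Function.Injective i) : Function.Injective (pullbackInl hexact g) :=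
  fun _ _ h => hi congr(($h : M × F).1)

theorem pullbackSnd_surjective {p : M →ₗ[R] N} (hp : Function.Surjective p) (g : F →ₗ[R] N) :
    Function.Surjective (pullbackSnd p g) := fun f =>
  let ⟨m, hm⟩ := hp (g f)
  ⟨⟨(m, f), hm⟩, rfl⟩

theorem pullbackFst_surjective (p : M →ₗ[R] N) {g : F →ₗ[R] N} (hg : Function.Surjective g) :
    Function.Surjective (pullbackFst p g) := fun m =>
  let ⟨f, hf⟩ := hg (p m)
  ⟨⟨(m, f), hf.symm⟩, rfl⟩

theorem exact_pullbackInl_pullbackSnd {i : L →ₗ[R] M} {p : M →ₗ[R] N} (hexact : Function.Exact i p)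
    (g : F →ₗ[R] N) :
    Function.Exact (pullbackInl hexact g) (pullbackSnd p g) := by
  rintro ⟨⟨m, f⟩, hmf⟩
  simp only [pullbackSnd, comp_apply, Submodule.subtype_apply, snd_apply]
  constructor
  · rintro rfl
    obtain ⟨l, rfl⟩ := (hexact m).mp (by simpa [mem_pullback] using hmf)
    exact ⟨l, rfl⟩
  · rintro ⟨l, hl⟩
    exact congr(($hl : M × F).2).symm

end LinearMap

/-- If `0 → L → M → N → 0` is a short exact sequence with `N` S-h-divisible and `L`
S-torsion-free and S-h-divisible, then `M` is S-h-divisible. -/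
theorem shdivisible_of_extension
    (R : Type) [CommRing R] (S : Submonoid R)
    (L M N : Type) [AddCommGroup L] [Module R L] [AddCommGroup M] [Module R M]
    [AddCommGroup N] [Module R N]
    (i : L →ₗ[R] M) (p : M →ₗ[R] N)
    (hi : Function.Injective i) (hp : Function.Surjective p)
    (hexact : LinearMap.range i = LinearMap.ker p)
    (hLtf : ∀ (s : S) (x : L), (s : R) • x = 0 → x = 0)
    (hLdiv : IsSHDivisible R S L)
    (hNdiv : IsSHDivisible R S N) :
    IsSHDivisible R S M := by
  obtain ⟨ι, g, hg⟩ := hNdiv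
  have hip : Function.Exact i p := exact_iff.mpr hexact.symm
  have hL (s : S) : Function.Bijective (algebraMap R (End R L) s) :=
    ⟨(injective_iff_map_eq_zero _).mpr fun x hx => hLtf s x (by simpa using hx),
      hLdiv.surjective_algebraMap s⟩
  have hE (s : S) : Function.Bijective (algebraMap R (End R (p.pullback g)) s) :=
    bijective_algebraMap_of_exact (E := p.pullback g) (pullbackInl_injective hip g hi)
      (pullbackSnd_surjective hp g) (exact_pullbackInl_pullbackSnd hip g) (s : R) (hL s)
      (bijective_algebraMap_of_module_localization _ s)
  exact (isSHDivisible_of_bijective_algebraMap (C := p.pullback g) hE).of_surjective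
    (p.pullbackFst g) (p.pullbackFst_surjective hg)
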